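/- Let Γ ≤ S_n be a permutation group, V an invariant subspace of Γ, and z ∈ Z^n with Σ_i z_i = k having locally minimal projection onto V. If stab_Γ(z) = stab_Γ(π_V(z)), then z is a core point for Γ. -/

import Mathlib

noncomputable section

open scoped RealInnerProductSpace

def permAct {n : ℕ} (γ : Equiv.Perm (Fin n)) (x : EuclideanSpace ℝ (Fin n)) :
    EuclideanSpace ℝ (Fin n) := WithLp.toLp 2 (fun i => x (γ⁻¹ i))

def allOnes (n : ℕ) : EuclideanSpace ℝ (Fin n) := WithLp.toLp 2 (fun _ => 1)

def intVec {n : ℕ} (z : Fin n → ℤ) : EuclideanSpace ℝ (Fin n) := WithLp.toLp 2 (fun i => (z i : ℝ))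

def orbitSet {n : ℕ} (Γ : Subgroup (Equiv.Perm (Fin n))) (x : EuclideanSpace ℝ (Fin n)) :
    Set (EuclideanSpace ℝ (Fin n)) := {y | ∃ γ ∈ Γ, y = permAct γ x}

def IsCorePoint {n : ℕ} (Γ : Subgroup (Equiv.Perm (Fin n))) (z : Fin n → ℤ) : Prop :=
  ∀ y : Fin n → ℤ, intVec y ∈ convexHull ℝ (orbitSet Γ (intVec z)) →
    intVec y ∈ orbitSet Γ (intVec z)

def stabSub {n : ℕ} (Γ : Subgroup (Equiv.Perm (Fin n))) (v : EuclideanSpace ℝ (Fin n)) :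
    Subgroup (Equiv.Perm (Fin n)) where
  carrier := {γ | γ ∈ Γ ∧ permAct γ v = v}
  one_mem' := ⟨Γ.one_mem, rfl⟩
  mul_mem' := fun {a b} ha hb => ⟨Γ.mul_mem ha.1 hb.1, by
    have h : permAct (a * b) v = permAct a (permAct b v) := rfl
    rw [h, hb.2, ha.2]⟩
  inv_mem' := fun {a} ha => ⟨Γ.inv_mem ha.1, by
    conv_lhs => rw [← ha.2]
    have h : permAct a⁻¹ (permAct a v) = permAct (a⁻¹ * a) v := rfl
    rw [h, inv_mul_cancel]; rfl⟩

/-!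
Let `y` be an integer point of the convex hull of the orbit `Γz`. All orbit points have coordinate
sum `k` and norm `‖z‖`, so `y` has coordinate sum `k` and `‖y‖ ≤ ‖z‖`, and local minimality gives
`‖π z‖ ≤ ‖π y‖`. Put `p = π y`. Since `π` commutes with `Γ`, the functional `⟪p, ·⟫` takes the value
`⟪p, γ π z⟫ ≤ ‖p‖ ‖π z‖ ≤ ‖p‖²` at `γ z` and the value `‖p‖²` at `y`. So `y` lies in the convex hull
of the orbit points attaining this bound, and attaining it forces `γ π z = p`. Two such points
`γ₁ z`, `γ₂ z` have `γ₁⁻¹ γ₂ ∈ stab(π z) = stab z`, hence coincide: this face is a single point,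
which must be `y`.
-/

section FaceOfConvexHull

variable {𝕜 E : Type*} [Field 𝕜] [LinearOrder 𝕜] [IsStrictOrderedRing 𝕜] [AddCommGroup E]
  [Module 𝕜 E]

theorem mem_convexHull_sep_eq_of_le (f : E →ₗ[𝕜] 𝕜) {s : Set E} {c : 𝕜} {x : E}
    (hs : ∀ y ∈ s, f y ≤ c) (hx : x ∈ convexHull 𝕜 s) (hc : c ≤ f x) :
    x ∈ convexHull 𝕜 {y ∈ s | f y = c} := by
  classical
  obtain ⟨ι, _, w, v, hw₀, hw₁, hv, rfl⟩ := mem_convexHull_iff_exists_fintype.mp hx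
  have hle : ∀ i ∈ Finset.univ, w i * f (v i) ≤ w i * c := fun i _ =>
    mul_le_mul_of_nonneg_left (hs _ (hv i)) (hw₀ i)
  have hsum : ∑ i, w i * f (v i) = ∑ i, w i * c := by
    refine le_antisymm (Finset.sum_le_sum hle) ?_
    simpa [← Finset.sum_mul, hw₁, map_sum] using hc
  have hface : ∀ i, w i ≠ 0 → f (v i) = c := fun i hi =>
    mul_left_cancel₀ hi ((Finset.sum_eq_sum_iff_of_le hle).mp hsum i (Finset.mem_univ i))
  rw [← Finset.centerMass_eq_of_sum_1 _ _ hw₁, ← Finset.centerMass_filter_ne_zero]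
  refine Finset.centerMass_mem_convexHull _ (fun i _ => hw₀ i) ?_ fun i hi => ?_
  · rw [Finset.sum_filter_ne_zero, hw₁]
    exact one_pos
  · exact ⟨hv i, hface i (Finset.mem_filter.mp hi).2⟩

end FaceOfConvexHull

section InnerProductSpace

variable {E : Type*} [NormedAddCommGroup E] [InnerProductSpace ℝ E]

theorem eq_of_norm_le_of_inner_eq_norm_sq {a b : E} (hnorm : ‖a‖ ≤ ‖b‖)
    (hinner : ⟪b, a⟫ = ‖b‖ ^ 2) : a = b := by
  have h : ‖a - b‖ ^ 2 ≤ 0 := by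
    rw [norm_sub_sq_real, real_inner_comm, hinner]
    nlinarith [norm_nonneg a]
  simpa [sub_eq_zero] using h

theorem Submodule.inner_starProjection_right_of_mem (K : Submodule ℝ E)
    [K.HasOrthogonalProjection] {u : E} (hu : u ∈ K) (v : E) :
    ⟪u, K.starProjection v⟫ = ⟪u, v⟫ := by
  rw [← K.inner_starProjection_left_eq_right, K.starProjection_eq_self_iff.mpr hu]

end InnerProductSpace

section PermAction

variable {n : ℕ}

def permIsometry (γ : Equiv.Perm (Fin n)) :
    EuclideanSpace ℝ (Fin n) ≃ₗᵢ[ℝ] EuclideanSpace ℝ (Fin n) :=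
  LinearIsometryEquiv.piLpCongrLeft 2 ℝ ℝ γ

theorem permIsometry_apply (γ : Equiv.Perm (Fin n)) (x : EuclideanSpace ℝ (Fin n)) :
    permIsometry γ x = permAct γ x := rfl

theorem permIsometry_symm_apply (γ : Equiv.Perm (Fin n)) (x : EuclideanSpace ℝ (Fin n)) :
    (permIsometry γ).symm x = permAct γ⁻¹ x := by
  rw [permIsometry, LinearIsometryEquiv.piLpCongrLeft_symm]
  rfl

theorem permAct_mul (a b : Equiv.Perm (Fin n)) (x : EuclideanSpace ℝ (Fin n)) :
    permAct (a * b) x = permAct a (permAct b x) := rfl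

theorem permAct_inv_permAct (γ : Equiv.Perm (Fin n)) (x : EuclideanSpace ℝ (Fin n)) :
    permAct γ⁻¹ (permAct γ x) = x := by
  rw [← permAct_mul, inv_mul_cancel]
  rfl

theorem norm_permAct (γ : Equiv.Perm (Fin n)) (x : EuclideanSpace ℝ (Fin n)) :
    ‖permAct γ x‖ = ‖x‖ :=
  (permIsometry γ).norm_map x

theorem sum_permAct (γ : Equiv.Perm (Fin n)) (x : EuclideanSpace ℝ (Fin n)) :
    ∑ i, permAct γ x i = ∑ i, x i :=
  Equiv.sum_comp γ⁻¹ x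

theorem starProjection_permAct {Γ : Subgroup (Equiv.Perm (Fin n))}
    {V : Submodule ℝ (EuclideanSpace ℝ (Fin n))} (hV : ∀ γ ∈ Γ, ∀ v ∈ V, permAct γ v ∈ V)
    {γ : Equiv.Perm (Fin n)} (hγ : γ ∈ Γ) (x : EuclideanSpace ℝ (Fin n)) :
    V.starProjection (permAct γ x) = permAct γ (V.starProjection x) := by
  refine V.eq_starProjection_of_mem_of_inner_eq_zero (hV γ hγ _ (V.starProjection_apply_mem x))
    fun w hw => ?_
  rw [← permIsometry_apply, ← permIsometry_apply, ← map_sub,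
    LinearIsometryEquiv.inner_map_eq_flip, permIsometry_symm_apply]
  exact V.starProjection_inner_eq_zero x _ (hV γ⁻¹ (Γ.inv_mem hγ) w hw)

theorem permAct_eq_of_stabSub_eq {Γ : Subgroup (Equiv.Perm (Fin n))}
    {x y : EuclideanSpace ℝ (Fin n)} (hstab : stabSub Γ x = stabSub Γ y)
    {γ₁ γ₂ : Equiv.Perm (Fin n)} (hγ₁ : γ₁ ∈ Γ) (hγ₂ : γ₂ ∈ Γ)
    (h : permAct γ₁ y = permAct γ₂ y) : permAct γ₁ x = permAct γ₂ x := by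
  have hy : γ₁⁻¹ * γ₂ ∈ stabSub Γ y :=
    ⟨Γ.mul_mem (Γ.inv_mem hγ₁) hγ₂, by rw [permAct_mul, ← h, permAct_inv_permAct]⟩
  rw [← hstab] at hy
  calc permAct γ₁ x = permAct γ₁ (permAct (γ₁⁻¹ * γ₂) x) := by rw [hy.2]
    _ = permAct γ₂ x := by rw [← permAct_mul, mul_inv_cancel_left]

end PermAction

section ConvexHullOfOrbit

variable {n : ℕ} {Γ : Subgroup (Equiv.Perm (Fin n))} {ζ x : EuclideanSpace ℝ (Fin n)}

theorem convexHull_orbitSet_subset {P : Set (EuclideanSpace ℝ (Fin n))} (hP : Convex ℝ P)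
    (h : ∀ γ ∈ Γ, permAct γ ζ ∈ P) : convexHull ℝ (orbitSet Γ ζ) ⊆ P :=
  convexHull_min (by rintro _ ⟨γ, hγ, rfl⟩; exact h γ hγ) hP

theorem norm_le_of_mem_convexHull_orbitSet (hx : x ∈ convexHull ℝ (orbitSet Γ ζ)) :
    ‖x‖ ≤ ‖ζ‖ := by
  simpa using convexHull_orbitSet_subset (convex_closedBall 0 ‖ζ‖)
    (fun γ _ => by simp [norm_permAct]) hx

theorem sum_eq_of_mem_convexHull_orbitSet (hx : x ∈ convexHull ℝ (orbitSet Γ ζ)) :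
    ∑ i, x i = ∑ i, ζ i :=
  convexHull_orbitSet_subset (P := {y | ∑ i, y i = ∑ i, ζ i})
    (convex_hyperplane ⟨fun a b => by simp [Finset.sum_add_distrib],
      fun c a => by simp [Finset.mul_sum]⟩ _)
    (fun γ _ => sum_permAct γ ζ) hx

theorem mem_orbitSet_of_mem_convexHull {V : Submodule ℝ (EuclideanSpace ℝ (Fin n))}
    (hV : ∀ γ ∈ Γ, ∀ v ∈ V, permAct γ v ∈ V)
    (hstab : stabSub Γ ζ = stabSub Γ (V.starProjection ζ)) (hx : x ∈ convexHull ℝ (orbitSet Γ ζ))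
    (hnorm : ‖V.starProjection ζ‖ ≤ ‖V.starProjection x‖) : x ∈ orbitSet Γ ζ := by
  set q := V.starProjection ζ
  set p := V.starProjection x
  have hp : ∀ y, ⟪p, y⟫ = ⟪p, V.starProjection y⟫ := fun y =>
    (V.inner_starProjection_right_of_mem (V.starProjection_apply_mem x) y).symm
  have horbit : ∀ γ ∈ Γ, ⟪p, permAct γ ζ⟫ = ⟪p, permAct γ q⟫ := fun γ hγ => by
    rw [hp, starProjection_permAct hV hγ]
  have hle : ∀ γ ∈ Γ, ⟪p, permAct γ ζ⟫ ≤ ‖p‖ ^ 2 := fun γ hγ =>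
    calc ⟪p, permAct γ ζ⟫ = ⟪p, permAct γ q⟫ := horbit γ hγ
      _ ≤ ‖p‖ * ‖permAct γ q‖ := real_inner_le_norm _ _
      _ ≤ ‖p‖ ^ 2 := by rw [norm_permAct, sq]; gcongr
  have hface : x ∈ convexHull ℝ {y ∈ orbitSet Γ ζ | innerₛₗ ℝ p y = ‖p‖ ^ 2} :=
    mem_convexHull_sep_eq_of_le (innerₛₗ ℝ p) (by rintro _ ⟨γ, hγ, rfl⟩; exact hle γ hγ) hx
      (show ‖p‖ ^ 2 ≤ ⟪p, x⟫ by rw [hp, real_inner_self_eq_norm_sq])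
  have hmax : ∀ γ ∈ Γ, ⟪p, permAct γ ζ⟫ = ‖p‖ ^ 2 → permAct γ q = p := fun γ hγ h =>
    eq_of_norm_le_of_inner_eq_norm_sq (by rwa [norm_permAct]) (by rwa [← horbit γ hγ])
  have hsub : {y ∈ orbitSet Γ ζ | innerₛₗ ℝ p y = ‖p‖ ^ 2}.Subsingleton := by
    rintro _ ⟨⟨γ₁, hγ₁, rfl⟩, h₁⟩ _ ⟨⟨γ₂, hγ₂, rfl⟩, h₂⟩
    exact permAct_eq_of_stabSub_eq hstab hγ₁ hγ₂ (by rw [hmax γ₁ hγ₁ h₁, hmax γ₂ hγ₂ h₂])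
  rw [hsub.convex.convexHull_eq] at hface
  exact hface.1

end ConvexHullOfOrbit

theorem stmt10 {n : ℕ} (Γ : Subgroup (Equiv.Perm (Fin n)))
    (V : Submodule ℝ (EuclideanSpace ℝ (Fin n)))
    (hV : ∀ γ ∈ Γ, ∀ v ∈ V, permAct γ v ∈ V)
    (z : Fin n → ℤ) (k : ℤ) (hk : ∑ i, z i = k)
    (hmin : ∀ z' : Fin n → ℤ, ∑ i, z' i = k → ‖intVec z'‖ ≤ ‖intVec z‖ →
      ‖(Submodule.orthogonalProjectionOnto V (intVec z) : EuclideanSpace ℝ (Fin n))‖ ≤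
        ‖(Submodule.orthogonalProjectionOnto V (intVec z') : EuclideanSpace ℝ (Fin n))‖)
    (hstab : stabSub Γ (intVec z) =
      stabSub Γ (Submodule.orthogonalProjectionOnto V (intVec z) : EuclideanSpace ℝ (Fin n))) :
    IsCorePoint Γ z := by
  intro y hy
  have hsum : ∑ i, y i = k := by
    have h := sum_eq_of_mem_convexHull_orbitSet hy
    simp only [intVec] at h
    rw [← hk]
    exact_mod_cast h
  exact mem_orbitSet_of_mem_convexHull hV hstab hy
    (hmin y hsum (norm_le_of_mem_convexHull_orbitSet hy))
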